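/- Let k \ge 3 and let n be a multiple of 4\lfloor(k-1)/2\rfloor. There exists an n-vertex \widehat{P}_k-free graph with at least \lfloor(k-1)/2\rfloor \cdot n^2/8 triangles. Concretely, take the complete bipartite graph with parts A, B of size n/2 and add edges inside A so that A induces a disjoint union of copies of K_{s,s} with s = \lfloor(k-1)/2\rfloor; this graph is \widehat{P}_k-free and has exactly \lfloor(k-1)/2\rfloor n^2/8 triangles. -/

import Mathlib

open SimpleGraph

/-- `G` contains a copy of `H` (a subgraph isomorphic to `H`). -/
def containsCopy {W V : Type*} (H : SimpleGraph W) (G : SimpleGraph V) : Prop :=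
  ∃ f : H →g G, Function.Injective f

/-- The number of triangles of `G`. -/
noncomputable def triCount {V : Type*} (G : SimpleGraph V) : ℕ :=
  {s : Finset V | G.IsNClique 3 s}.ncard

/-- The number of edges of `G`. -/
noncomputable def edgeCount {V : Type*} (G : SimpleGraph V) : ℕ :=
  G.edgeSet.ncard

/-- The suspension `K_1 ∨ H` of a graph `H`: a new vertex (`none`) joined to all
vertices of `H`. -/
def susp {W : Type*} (H : SimpleGraph W) : SimpleGraph (Option W) where
  Adj a b :=
    match a, b with
    | some x, some y => H.Adj x y
    | some _, none => True
    | none, some _ => True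
    | none, none => False
  symm := ⟨by
    rintro (_ | x) (_ | y) h
    · exact h
    · trivial
    · trivial
    · exact SimpleGraph.Adj.symm h⟩
  loopless := ⟨by
    rintro (_ | x) h
    · exact h
    · exact H.irrefl h⟩

/-- The Turán number: maximum number of edges of an `H`-free graph on `n` vertices. -/
noncomputable def exNum (n : ℕ) {W : Type*} (H : SimpleGraph W) : ℕ :=
  sSup {m | ∃ G : SimpleGraph (Fin n), ¬ containsCopy H G ∧ edgeCount G = m}

/-- The codegree of the pair `a, b`: number of common neighbours. -/
noncomputable def codeg {V : Type*} (G : SimpleGraph V) (a b : V) : ℕ :=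
  (G.neighborSet a ∩ G.neighborSet b).ncard

/-! Let `H` be the disjoint union of copies of `K_{s,s}` and `G` the join of `H` with an
independent set `B`. The neighbourhood of a vertex of `B` is `H`, whose components have `2s < k + 1`
vertices, so it contains no `P_k`. The neighbourhood of a vertex `a` of `H` is the complete
bipartite graph between `B` and the `s` vertices opposite `a` in its block; these `s` vertices
cover all its edges, whereas every vertex cover of `P_k` has at least `⌊(k+1)/2⌋ > s` vertices.
Each edge of `H` together with each vertex of `B` spans a triangle; for `n = 4st` this gives
`ts² · n/2 = s n²/8` triangles. -/

open Function Set

namespace SimpleGraph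

variable {V W α β ι X γ : Type*}

lemma containsCopy_iff_isContained {H : SimpleGraph W} {G : SimpleGraph V} :
    containsCopy H G ↔ H ⊑ G :=
  ⟨fun ⟨f, hf⟩ => ⟨⟨f, hf⟩⟩, fun ⟨f⟩ => ⟨f.toHom, f.injective⟩⟩

lemma triCount_map_equiv (G : SimpleGraph V) (e : V ≃ W) : triCount (G.map e) = triCount G := by
  change ((G.map e).cliqueSet 3).ncard = (G.cliqueSet 3).ncard
  rw [cliqueSet_map_of_equiv, ncard_image_of_injective _ (Finset.map_injective _)]

lemma exists_adj_copy_of_susp_isContained {H : SimpleGraph W} {G : SimpleGraph V}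
    (h : susp H ⊑ G) : ∃ v, ∃ f : Copy H G, ∀ x, G.Adj v (f x) := by
  obtain ⟨f⟩ := h
  let toSusp : H ↪g susp H := ⟨⟨some, Option.some_injective W⟩, Iff.rfl⟩
  exact ⟨f none, f.comp toSusp.toCopy,
    fun x => f.toHom.map_adj (show (susp H).Adj none (some x) from trivial)⟩

lemma Preconnected.eq_of_forall_adj_eq {G : SimpleGraph V} (hG : G.Preconnected) {c : V → γ}
    (hc : ∀ ⦃x y⦄, G.Adj x y → c x = c y) (x y : V) : c x = c y := by
  obtain ⟨p⟩ := hG x y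
  induction p with
  | nil => rfl
  | cons h _ ih => exact (hc h).trans ih

lemma half_le_ncard_of_isVertexCover_pathGraph {n : ℕ} {c : Set (Fin n)}
    (hc : (pathGraph n).IsVertexCover c) : n / 2 ≤ c.ncard := by
  have hedge : ∀ i : Fin (n / 2), ∃ j ∈ c, (j : ℕ) / 2 = i := by
    intro i
    have hadj : (pathGraph n).Adj ⟨2 * i, by omega⟩ ⟨2 * i + 1, by omega⟩ := by
      simp [pathGraph_adj]
    rcases hc hadj with h | h
    exacts [⟨_, h, by simp⟩, ⟨_, h, by simp; omega⟩]
  choose g hgc hg using hedge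
  calc n / 2 = (univ : Set (Fin (n / 2))).ncard := by simp
    _ ≤ c.ncard := ncard_le_ncard_of_injOn g (fun i _ => hgc i)
        (fun i _ j _ h => Fin.ext (by rw [← hg i, ← hg j, h])) (toFinite c)

def joinIndep (H : SimpleGraph α) (β : Type*) : SimpleGraph (α ⊕ β) :=
  (H ⊕g ⊥) ⊔ completeBipartiteGraph α β

section joinIndep

variable {H : SimpleGraph α}

@[simp] lemma joinIndep_adj_inl_inl {x y : α} :
    (H.joinIndep β).Adj (.inl x) (.inl y) ↔ H.Adj x y := by
  simp [joinIndep]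

@[simp] lemma joinIndep_adj_inl_inr {x : α} {b : β} : (H.joinIndep β).Adj (.inl x) (.inr b) := by
  simp [joinIndep]

@[simp] lemma joinIndep_adj_inr_inl {b : β} {x : α} : (H.joinIndep β).Adj (.inr b) (.inl x) := by
  simp [joinIndep]

@[simp] lemma not_joinIndep_adj_inr_inr {b b' : β} :
    ¬ (H.joinIndep β).Adj (.inr b) (.inr b') := by
  simp [joinIndep]

lemma isVertexCover_range_inl_joinIndep : (H.joinIndep β).IsVertexCover (range Sum.inl) := by
  rintro (x | b) (y | b') h <;> simp_all

end joinIndep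

/-- The disjoint union of copies of `K_{X,X}` indexed by `ι`: the vertex `(j, σ, x)` is `x` on
side `σ` of the `j`-th copy. -/
def blockGraph (ι X : Type*) : SimpleGraph (ι × Bool × X) where
  Adj x y := x.1 = y.1 ∧ x.2.1 ≠ y.2.1
  symm := ⟨fun _ _ h => ⟨h.1.symm, h.2.symm⟩⟩
  loopless := ⟨fun _ h => h.2 rfl⟩

lemma card_le_of_copy_blockGraph [Fintype W] [Fintype X] {H : SimpleGraph W}
    (hH : H.Preconnected) (f : Copy H (blockGraph ι X)) :
    Fintype.card W ≤ 2 * Fintype.card X := by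
  have hblock := hH.eq_of_forall_adj_eq (c := fun w => (f w).1)
    fun _ _ h => (f.toHom.map_adj h).1
  have hinj : Injective fun w => (f w).2 := fun x y h => f.injective (Prod.ext (hblock x y) h)
  simpa using Fintype.card_le_of_injective _ hinj

theorem free_susp_pathGraph_joinIndep_blockGraph [Fintype X] {k : ℕ}
    (hk : 2 * Fintype.card X + 1 ≤ k) :
    (susp (pathGraph (k + 1))).Free ((blockGraph ι X).joinIndep β) := by
  intro h
  obtain ⟨v, f, hv⟩ := exists_adj_copy_of_susp_isContained h
  rcases v with a | b
  · -- the path's vertices on the left cover its edges, and all lie opposite `a` in `a`'s block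
    have hcover := isVertexCover_range_inl_joinIndep.preimage f.toHom
    rw [Copy.coe_toHom] at hcover
    have hside : f '' (f ⁻¹' range Sum.inl) ⊆ range fun q : X => Sum.inl (a.1, !a.2.1, q) := by
      rintro _ ⟨i, ⟨x, hx⟩, rfl⟩
      have hax := hv i
      rw [← hx, joinIndep_adj_inl_inl] at hax
      have hxside : x.2.1 = !a.2.1 := Bool.eq_not.mpr hax.2.symm
      exact ⟨x.2.2, by rw [← hx, hax.1, ← hxside]⟩
    have hsmall := ncard_le_ncard hside (toFinite _)
    rw [ncard_image_of_injective (f := ⇑f) _ f.injective,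
      ncard_range_of_injective fun _ _ h => by simpa using h] at hsmall
    have hlarge := half_le_ncard_of_isVertexCover_pathGraph hcover
    simp only [Nat.card_eq_fintype_card] at hsmall
    omega
  · -- the whole path lies on the left, hence in a single block
    have hleft : ∀ i, ∃ x, f i = .inl x := by
      intro i
      have hbi := hv i
      rcases hfi : f i with x | b'
      · exact ⟨x, rfl⟩
      · rw [hfi] at hbi; exact absurd hbi not_joinIndep_adj_inr_inr
    choose g hg using hleft
    let g' : Copy (pathGraph (k + 1)) (blockGraph ι X) :=
      ⟨⟨g, fun {i j} h => by simpa [hg] using f.toHom.map_adj h⟩,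
        fun i j h => f.injective (by change f i = f j; rw [hg, hg]; exact congrArg Sum.inl h)⟩
    have := card_le_of_copy_blockGraph (pathGraph_preconnected _) g'
    simp only [Fintype.card_fin] at this
    omega

theorem card_mul_le_triCount_joinIndep_blockGraph [Fintype ι] [Fintype X] [Fintype β] :
    Fintype.card ι * Fintype.card X ^ 2 * Fintype.card β ≤
      triCount ((blockGraph ι X).joinIndep β) := by
  classical
  let T : ι × X × X × β → Finset ((ι × Bool × X) ⊕ β) := fun ⟨j, p, q, b⟩ =>
    {.inl (j, false, p), .inl (j, true, q), .inr b}
  have hclique : ∀ x, ((blockGraph ι X).joinIndep β).IsNClique 3 (T x) := by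
    rintro ⟨j, p, q, b⟩
    simp [T, is3Clique_triple_iff, blockGraph]
  have hT : Injective T := by
    rintro ⟨j, p, q, b⟩ ⟨j', p', q', b'⟩ h
    simp only [Finset.ext_iff, Finset.mem_insert, Finset.mem_singleton, Sum.forall, Sum.inl.injEq,
      reduceCtorEq, or_false, Prod.forall, Prod.mk.injEq, Bool.forall_bool, true_and,
      Bool.false_eq_true, false_and, and_false, Bool.true_eq_false, false_or, Sum.inr.injEq,
      eq_iff_eq_cancel_left, T] at h
    obtain ⟨hj, hp⟩ := ((h.1 j).1 p).mp ⟨rfl, rfl⟩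
    obtain ⟨-, hq⟩ := ((h.1 j).2 q).mp ⟨rfl, rfl⟩
    rw [hj, hp, hq, h.2]
  calc Fintype.card ι * Fintype.card X ^ 2 * Fintype.card β = (range T).ncard := by
        rw [ncard_range_of_injective hT]
        simp only [Nat.card_eq_fintype_card, Fintype.card_prod]
        ring
    _ ≤ _ := ncard_le_ncard (range_subset_iff.2 hclique) (toFinite _)

end SimpleGraph

/-- For `k ≥ 3` and `n` a multiple of `4⌊(k-1)/2⌋`, there is an `n`-vertex
`\widehat{P}_k`-free graph with at least `⌊(k-1)/2⌋·n²/8` triangles. -/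
theorem suspension_path_lower (k n : ℕ) (hk : 3 ≤ k)
    (hdvd : 4 * ((k - 1) / 2) ∣ n) :
    ∃ G : SimpleGraph (Fin n),
      ¬ containsCopy (susp (pathGraph (k + 1))) G ∧
      ((k - 1) / 2) * n ^ 2 ≤ 8 * triCount G := by
  set s := (k - 1) / 2
  obtain ⟨t, rfl⟩ := hdvd
  let A := Fin t × Bool × Fin s
  let G := (blockGraph (Fin t) (Fin s)).joinIndep A
  let e : A ⊕ A ≃ Fin (4 * s * t) := Fintype.equivFinOfCardEq (by
    simp only [Fintype.card_sum, Fintype.card_prod, Fintype.card_fin, Fintype.card_bool, A]; ring)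
  refine ⟨G.map e, ?_, ?_⟩
  · rw [containsCopy_iff_isContained]
    exact (free_congr_right (Iso.map e G)).mp
      (free_susp_pathGraph_joinIndep_blockGraph (by simp only [Fintype.card_fin]; omega))
  · rw [triCount_map_equiv]
    calc s * (4 * s * t) ^ 2 = 8 * (t * (2 * s) * (t * s ^ 2)) := by ring
      _ ≤ 8 * triCount G := by
        gcongr
        simpa [A, mul_comm] using
          card_mul_le_triCount_joinIndep_blockGraph (ι := Fin t) (X := Fin s) (β := A)
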